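/- arXiv:1101.3970 — 2 statements merged into one kernel-verified Lean document; each statement's English description precedes it below -/
import Mathlib

section
/- Let K be a 3CNF with m clauses over n variables whose clauses each have three distinct variables, let M be the n×n symmetric matrix with M_{ij} = ∑_k E^{(k)}_{ij} where E^{(k)}_{ij} = 1/2 (resp. −1/2, 0) if x_i, x_j occur in clause k with different (resp. same, not both) polarities and i ≠ j. Then for a ∈ {-1,1}ⁿ corresponding to assignment A (a(i) = 2A(i) − 1), aᵀ M a = 4·N − 3m, where N is the number of clauses NAE-satisfied by A. -/
/-! Write `ℓ s = ±1` for the truth value of the `s`-th literal of a clause under `A`. Passing from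
the variable signs `a` to the literal signs absorbs the polarities, so each clause contributes
`-(ℓ 0 ℓ 1 + ℓ 0 ℓ 2 + ℓ 1 ℓ 2)` to `aᵀ M a`: this is `-3` when the three literals agree and `1`
otherwise. -/

open Matrix

/-- The contribution matrix `E^{(k)}` of clause `k` (given by its variable
positions `var` and polarities `pol`): `1/2` if the two variables occur in the
clause with different polarities, `-1/2` if with the same polarity, `0`
otherwise (in particular on the diagonal). -/
noncomputable def clauseEntry (n : ℕ) (var : Fin 3 → Fin n) (pol : Fin 3 → Bool)
    (p q : Fin n) : ℝ :=
  if p ≠ q then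
    ∑ s : Fin 3, ∑ t : Fin 3,
      if var s = p ∧ var t = q then
        (if pol s = pol t then -(1 / 2 : ℝ) else 1 / 2)
      else 0
  else 0

open Finset

section QuadraticForm

variable {n ι R : Type*} [Fintype n] [CommSemiring R]

theorem dotProduct_sum_mulVec (s : Finset ι) (M : ι → Matrix n n R) (a : n → R) :
    a ⬝ᵥ (∑ k ∈ s, M k) *ᵥ a = ∑ k ∈ s, a ⬝ᵥ M k *ᵥ a := by
  rw [sum_mulVec, dotProduct_sum]

theorem dotProduct_single_mulVec [DecidableEq n] (i j : n) (c : R) (a : n → R) :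
    a ⬝ᵥ single i j c *ᵥ a = c * (a i * a j) := by
  rw [single_mulVec_eq, dotProduct_smul, dotProduct_single, smul_eq_mul]
  ring

end QuadraticForm

section Clause

variable {n : ℕ} {var : Fin 3 → Fin n} (pol : Fin 3 → Bool)

/-- The off-diagonal guard `p ≠ q` in `clauseEntry` becomes `s ≠ t` because the three variables
of a clause are distinct. -/
theorem of_clauseEntry_eq_sum_single (hvar : Function.Injective var) :
    of (clauseEntry n var pol) = ∑ s, ∑ t, if s = t then 0 else
      single (var s) (var t) (if pol s = pol t then -(1 / 2 : ℝ) else 1 / 2) := by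
  ext p q
  simp only [clauseEntry, of_apply, Matrix.sum_apply, apply_ite (fun M : Matrix _ _ ℝ => M p q),
    Matrix.zero_apply, single]
  split_ifs with hpq
  · refine sum_congr rfl fun s _ => sum_congr rfl fun t _ => ?_
    grind
  · refine (sum_eq_zero fun s _ => sum_eq_zero fun t _ => ?_).symm
    grind [Function.Injective]

theorem pairCoeff_mul_signs (x y p q : Bool) :
    (if p = q then -(1 / 2 : ℝ) else 1 / 2) * ((if x then 1 else -1) * (if y then 1 else -1)) =
      -(1 / 2) * ((if x = p then 1 else -1) * (if y = q then 1 else -1)) := by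
  cases x <;> cases y <;> cases p <;> cases q <;> norm_num

theorem sum_offDiag_fin_three (ℓ : Fin 3 → ℝ) :
    ∑ s, ∑ t, (if s = t then 0 else -(1 / 2) * (ℓ s * ℓ t)) =
      -(ℓ 0 * ℓ 1 + ℓ 0 * ℓ 2 + ℓ 1 * ℓ 2) := by
  simp only [Fin.sum_univ_three, Fin.isValue, Fin.reduceEq, if_true, if_false]
  ring

theorem neg_sum_pairwise_signs {R : Type*} [CommRing R] (x y z : Prop) [Decidable x]
    [Decidable y] [Decidable z] :
    -((if x then 1 else -1) * (if y then 1 else -1) + (if x then 1 else -1) * (if z then 1 else -1)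
      + (if y then 1 else -1) * (if z then (1 : R) else -1)) =
      if ¬((x ↔ y) ∧ (x ↔ z)) then 1 else -3 := by
  by_cases x <;> by_cases y <;> by_cases z <;> simp_all <;> norm_num

theorem dotProduct_clauseEntry_mulVec (hvar : Function.Injective var) (A : Fin n → Bool)
    (a : Fin n → ℝ) (ha : ∀ i, a i = if A i then 1 else -1) :
    a ⬝ᵥ of (clauseEntry n var pol) *ᵥ a =
      if ¬((A (var 0) = pol 0 ↔ A (var 1) = pol 1) ∧ (A (var 0) = pol 0 ↔ A (var 2) = pol 2))
      then 1 else -3 := by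
  rw [of_clauseEntry_eq_sum_single pol hvar]
  simp only [dotProduct_sum_mulVec, apply_ite (fun M : Matrix _ _ ℝ => a ⬝ᵥ M *ᵥ a),
    zero_mulVec, dotProduct_zero, dotProduct_single_mulVec, ha, pairCoeff_mul_signs]
  exact (sum_offDiag_fin_three _).trans (neg_sum_pairwise_signs _ _ _)

end Clause

theorem sum_ite_one_neg_three {ι R : Type*} [CommRing R] (s : Finset ι) (P : ι → Prop)
    [DecidablePred P] :
    ∑ i ∈ s, (if P i then (1 : R) else -3) = 4 * #(s.filter P) - 3 * #s := by
  rw [sum_ite, sum_const, sum_const, ← card_filter_add_card_filter_not (s := s) P, nsmul_eq_mul,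
    nsmul_eq_mul]
  push_cast
  ring

/-- `aᵀ M a = 4N - 3m`, where `M` is the matrix associated to a 3CNF and `N`
is the number of clauses NAE-satisfied by the assignment `A`. -/
theorem quadratic_form_counts_nae (n m : ℕ)
    (var : Fin m → Fin 3 → Fin n) (hvar : ∀ k, Function.Injective (var k))
    (pol : Fin m → Fin 3 → Bool)
    (M : Matrix (Fin n) (Fin n) ℝ)
    (hM : ∀ p q, M p q = ∑ k : Fin m, clauseEntry n (var k) (pol k) p q)
    (A : Fin n → Bool) (a : Fin n → ℝ)
    (ha : ∀ i, a i = if A i then 1 else -1)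
    (N : ℕ)
    (hN : N = (Finset.univ.filter (fun k : Fin m =>
      ¬ ((A (var k 0) = pol k 0 ↔ A (var k 1) = pol k 1) ∧
         (A (var k 0) = pol k 0 ↔ A (var k 2) = pol k 2)))).card) :
    a ⬝ᵥ M.mulVec a = 4 * N - 3 * m := by
  have hM' : M = ∑ k, of (clauseEntry n (var k) (pol k)) := by
    ext p q
    simp only [hM, Matrix.sum_apply, of_apply]
  rw [hM', dotProduct_sum_mulVec]
  simp only [dotProduct_clauseEntry_mulVec _ (hvar _) A a ha]
  rw [hN, sum_ite_one_neg_three, card_univ, Fintype.card_fin]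
end

section
/- Suppose a 3CNF K over n variables admits a (t,k,d)-collection: t inconsistent even k-tuples of clauses of K such that each clause of K appears in at most d of the tuples (d > 0). Then for any assignment A, the number of distinct clauses of K that are not satisfied as 3XOR by A is at least ⌈t/d⌉. -/
/-- If a 3CNF `K` admits a `(t,k,d)`-collection (a family of `t` inconsistent
even `k`-tuples of clauses of `K` such that each clause appears in at most `d`
of the tuples), then for every assignment `A` at least `⌈t/d⌉` distinct
clauses of `K` are not satisfied as 3XOR by `A`. -/
theorem collection_gives_many_non3xor_clauses (n m t k d : ℕ) (hd : 0 < d)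
    (K : Fin m → Fin 3 → Fin n × Bool)
    (D : Fin t → Fin k → Fin m)
    (heven : ∀ i : Fin t, ∀ v : Fin n,
      (∑ l : Fin k,
        (Finset.univ.filter (fun j : Fin 3 => (K (D i l) j).1 = v)).card) % 2 = 0)
    (hinc : ∀ i : Fin t,
      (∑ l : Fin k,
        (Finset.univ.filter (fun j : Fin 3 => (K (D i l) j).2 = false)).card) % 2 = 1)
    (hmult : ∀ c : Fin m,
      (Finset.univ.filter (fun i : Fin t => ∃ l : Fin k, D i l = c)).card ≤ d)
    (A : Fin n → Bool) :
    (⌈(t : ℚ) / d⌉ : ℤ) ≤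
      (((Finset.univ.filter (fun c : Fin m =>
        ¬ (Finset.univ.filter (fun j : Fin 3 =>
            A (K c j).1 = (K c j).2)).card % 2 = 1)).card : ℤ)) := by
  classical
  set B : Finset (Fin m) := Finset.univ.filter (fun c : Fin m =>
        ¬ (Finset.univ.filter (fun j : Fin 3 =>
            A (K c j).1 = (K c j).2)).card % 2 = 1) with hB
  have key : ∀ i : Fin t, ∃ l : Fin k, D i l ∈ B := by
    intro i
    by_contra hcon
    push_neg at hcon
    have hall : ∀ l : Fin k,
        ((Finset.univ.filter (fun j : Fin 3 =>
          A (K (D i l) j).1 = (K (D i l) j).2)).card) % 2 = 1 := by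
      intro l
      have h := hcon l
      simp only [hB, Finset.mem_filter, Finset.mem_univ, true_and, not_not] at h
      exact h
    -- fiberwise lemma
    have hfib : ∀ (g : Fin n → ZMod 2),
        (∑ l : Fin k, ∑ j : Fin 3, g ((K (D i l) j).1)) = 0 := by
      intro g
      have step : ∀ l : Fin k,
          (∑ j : Fin 3, g ((K (D i l) j).1))
          = ∑ w : Fin n,
              (((Finset.univ.filter (fun j : Fin 3 => (K (D i l) j).1 = w)).card : ℕ) : ZMod 2) * g w := by
        intro l
        rw [← Finset.sum_fiberwise' Finset.univ (fun j => (K (D i l) j).1) g]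
        refine Finset.sum_congr rfl (fun w _ => ?_)
        rw [Finset.sum_const, nsmul_eq_mul]
      simp_rw [step]
      rw [Finset.sum_comm]
      refine Finset.sum_eq_zero (fun w _ => ?_)
      rw [← Finset.sum_mul, ← Nat.cast_sum]
      have : ((∑ l : Fin k,
          (Finset.univ.filter (fun j : Fin 3 => (K (D i l) j).1 = w)).card : ℕ) : ZMod 2) = 0 := by
        rw [← ZMod.natCast_mod, heven i w, Nat.cast_zero]
      rw [this, zero_mul]
    have hk0 : (k : ZMod 2) = 0 := by
      have h1 := hfib (fun _ => 1)
      simp only [Finset.sum_const, Finset.card_univ, Fintype.card_fin, nsmul_eq_mul,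
        Nat.cast_ofNat, mul_one] at h1
      have : ((3 : ZMod 2)) = 1 := by decide
      calc (k : ZMod 2) = (k : ZMod 2) * 3 := by rw [this, mul_one]
        _ = 0 := h1
    -- sum S
    have hS1 : (∑ l : Fin k, ∑ j : Fin 3,
        (if A ((K (D i l) j).1) = (K (D i l) j).2 then (1 : ZMod 2) else 0)) = (k : ZMod 2) := by
      have : ∀ l : Fin k, (∑ j : Fin 3,
          (if A ((K (D i l) j).1) = (K (D i l) j).2 then (1 : ZMod 2) else 0)) = 1 := by
        intro l
        have hc : (((Finset.univ.filter (fun j : Fin 3 =>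
            A (K (D i l) j).1 = (K (D i l) j).2)).card : ℕ) : ZMod 2) = 1 := by
          rw [← ZMod.natCast_mod, hall l, Nat.cast_one]
        rw [← hc, Finset.card_filter, Nat.cast_sum]
        refine Finset.sum_congr rfl (fun j _ => ?_)
        split <;> simp_all
      simp_rw [this]
      rw [Finset.sum_const, nsmul_eq_mul, mul_one, Finset.card_univ, Fintype.card_fin]
    have hbool : ∀ (x y : Bool), (if x = y then (1 : ZMod 2) else 0)
        = 1 + (cond x 1 0) + (cond (!y) 1 0) + 1 := by decide
    have hS2 : (∑ l : Fin k, ∑ j : Fin 3,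
        (if A ((K (D i l) j).1) = (K (D i l) j).2 then (1 : ZMod 2) else 0)) = 1 := by
      simp_rw [hbool, Finset.sum_add_distrib]
      have hconst : (∑ l : Fin k, ∑ j : Fin 3, (1 : ZMod 2)) = 0 := hfib (fun _ => 1)
      have hF : (∑ l : Fin k, ∑ j : Fin 3,
          (cond (A ((K (D i l) j).1)) (1 : ZMod 2) 0)) = 0 :=
        hfib (fun w => cond (A w) 1 0)
      have hG : (∑ l : Fin k, ∑ j : Fin 3,
          (cond (!(K (D i l) j).2) (1 : ZMod 2) 0)) = 1 := by
        have : ∀ l : Fin k, (∑ j : Fin 3, (cond (!(K (D i l) j).2) (1 : ZMod 2) 0))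
            = (((Finset.univ.filter (fun j : Fin 3 => (K (D i l) j).2 = false)).card : ℕ) : ZMod 2) := by
          intro l
          rw [Finset.card_filter, Nat.cast_sum]
          refine Finset.sum_congr rfl (fun j _ => ?_)
          cases (K (D i l) j).2 <;> simp
        simp_rw [this, ← Nat.cast_sum]
        rw [← ZMod.natCast_mod, hinc i, Nat.cast_one]
      rw [hconst, hF, hG]
      decide
    rw [hS1, hk0] at hS2
    exact absurd hS2 (by decide)
  -- counting
  have hcount : t ≤ B.card * d := by
    have hsub : (Finset.univ : Finset (Fin t)) ⊆
        B.biUnion (fun c => Finset.univ.filter (fun i => ∃ l, D i l = c)) := by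
      intro i _
      obtain ⟨l, hl⟩ := key i
      exact Finset.mem_biUnion.mpr ⟨D i l, hl, by simp⟩
    calc t = (Finset.univ : Finset (Fin t)).card := by simp
      _ ≤ (B.biUnion (fun c => Finset.univ.filter (fun i => ∃ l, D i l = c))).card :=
          Finset.card_le_card hsub
      _ ≤ ∑ c ∈ B, (Finset.univ.filter (fun i => ∃ l, D i l = c)).card :=
          Finset.card_biUnion_le
      _ ≤ ∑ _c ∈ B, d := Finset.sum_le_sum (fun c _ => hmult c)
      _ = B.card * d := by rw [Finset.sum_const, smul_eq_mul]
  rw [Int.ceil_le]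
  rw [div_le_iff₀ (by exact_mod_cast hd : (0 : ℚ) < (d : ℚ))]
  push_cast
  exact_mod_cast hcount
end
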